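/- arXiv:2304.05245 — 5 statements merged into one kernel-verified Lean document; each statement's English description precedes it below -/
import Mathlib

section
/- Let ℓ ≥ 2 and let S be a set of pairs (i,j) with 1 ≤ i < j ≤ ℓ. Let v = Σ_{i=1}^ℓ a_i e_i ∈ ℝ^ℓ satisfy: (a) a_1 + … + a_ℓ = 0; (b) v ≠ 0; (c) ⟨m_{ij}, v⟩ ≥ 0 for all (i,j) ∈ S; and (d) there is a subset 𝒮 ⊆ S with ⟨m_{ij}, v⟩ = 0 for all (i,j) ∈ 𝒮 such that the linear span of {m_{ij} : (i,j) ∈ 𝒮} in ℝ^ℓ has dimension ℓ − 2 (i.e. v is orthogonal to a facet of σ, so v generates an extreme ray of the dual cone σ^∨). Then there exist a constant c > 0 and a partition {1,…,ℓ} = I⁻ ⊔ I⁺ into two nonempty sets such that a_i = −c/#I⁻ for every i ∈ I⁻ and a_i = c/#I⁺ for every i ∈ I⁺. -/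
/-!
The facet condition forces `v` to take at most two distinct values: `v` is constant along every
edge `(i, j) ∈ 𝒮`, so the indicator vectors of its level sets lie in the orthogonal complement
of `span {m_{ij} : (i,j) ∈ 𝒮}`, which has dimension at most `2`; as these indicators have disjoint
supports they are linearly independent. A nonzero vector with coordinate sum `0` taking at most
two values takes one negative value `a` on `I⁻` and one positive value `b` on `I⁺`, and
`#I⁻ a + #I⁺ b = 0`, so `c := #I⁺ b` works.
-/

open scoped RealInnerProductSpace

/-- The vector `m_{ij} = e_i - e_j` in `ℝ^ℓ`. -/
noncomputable def rootVec (ℓ : ℕ) (p : Fin ℓ × Fin ℓ) : EuclideanSpace ℝ (Fin ℓ) :=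
  EuclideanSpace.single p.1 (1 : ℝ) - EuclideanSpace.single p.2 (1 : ℝ)

open Finset Module

theorem rootVec_inner (ℓ : ℕ) (p : Fin ℓ × Fin ℓ) (x : EuclideanSpace ℝ (Fin ℓ)) :
    ⟪rootVec ℓ p, x⟫ = x p.1 - x p.2 := by
  simp [rootVec, inner_sub_left, EuclideanSpace.inner_single_left]

theorem mem_orthogonal_span_rootVec_iff {ℓ : ℕ} {𝒮 : Set (Fin ℓ × Fin ℓ)}
    {x : EuclideanSpace ℝ (Fin ℓ)} :
    x ∈ (Submodule.span ℝ (rootVec ℓ '' 𝒮))ᗮ ↔ ∀ p ∈ 𝒮, x p.1 = x p.2 := by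
  rw [← Submodule.span_singleton_le_iff_mem, ← Submodule.isOrtho_iff_le, Submodule.isOrtho_comm,
    Submodule.isOrtho_span]
  simp only [Set.forall_mem_image, Set.mem_singleton_iff, forall_eq, rootVec_inner, sub_eq_zero]

section LevelSets

variable {ι : Type*}

noncomputable def levelIndicator (v : ι → ℝ) (t : ℝ) : EuclideanSpace ℝ ι :=
  WithLp.toLp 2 fun i => if v i = t then 1 else 0

@[simp]
theorem levelIndicator_apply (v : ι → ℝ) (t : ℝ) (i : ι) :
    levelIndicator v t i = if v i = t then 1 else 0 :=
  rfl

theorem levelIndicator_self_ne_zero (v : ι → ℝ) (i : ι) : levelIndicator v (v i) ≠ 0 :=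
  fun h => by simpa using congr($h i)

variable [Fintype ι]

theorem inner_levelIndicator_of_ne (v : ι → ℝ) {s t : ℝ} (hst : s ≠ t) :
    ⟪levelIndicator v s, levelIndicator v t⟫ = 0 := by
  refine Finset.sum_eq_zero fun i _ => ?_
  by_cases hs : v i = s
  · simp [hs, hst]
  · simp [hs]

theorem linearIndependent_levelIndicator (v : ι → ℝ) :
    LinearIndependent ℝ fun t : univ.image v => levelIndicator v t := by
  refine linearIndependent_of_ne_zero_of_inner_eq_zero (fun ⟨t, ht⟩ => ?_)
    fun s t hst => inner_levelIndicator_of_ne v (Subtype.coe_ne_coe.mpr hst)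
  obtain ⟨i, -, rfl⟩ := mem_image.mp ht
  exact levelIndicator_self_ne_zero v i

theorem card_image_le_finrank_of_levelIndicator_mem (v : ι → ℝ)
    (K : Submodule ℝ (EuclideanSpace ℝ ι)) (hK : ∀ t, levelIndicator v t ∈ K) :
    #(univ.image v) ≤ finrank ℝ K := by
  rw [← Fintype.card_coe, ← finrank_span_eq_card (linearIndependent_levelIndicator v)]
  exact Submodule.finrank_mono (Submodule.span_le.mpr <| Set.range_subset_iff.mpr fun t => hK t)

end LevelSets

theorem eq_or_eq_of_card_image_le_two {ι β : Type*} [Fintype ι] [DecidableEq β]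
    {f : ι → β} (hcard : #(univ.image f) ≤ 2) {i j : ι} (hij : f i ≠ f j) (k : ι) :
    f k = f i ∨ f k = f j := by
  by_contra! hk
  have h3 : #{f i, f j, f k} = 3 := card_eq_three.mpr ⟨_, _, _, hij, hk.1.symm, hk.2.symm, rfl⟩
  have : #{f i, f j, f k} ≤ #(univ.image f) := card_le_card (by simp [insert_subset_iff])
  omega

theorem exists_neg_and_exists_pos_of_sum_eq_zero {ι : Type*} [Fintype ι] {v : ι → ℝ}
    (hsum : ∑ i, v i = 0) (hv : v ≠ 0) : (∃ i, v i < 0) ∧ ∃ j, 0 < v j := by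
  obtain ⟨j, hj⟩ : ∃ j, 0 < v j := by
    by_contra! h
    exact hv (funext ((sum_eq_zero_iff_of_nonpos fun k _ => h k).mp hsum · (mem_univ _)))
  refine ⟨?_, j, hj⟩
  by_contra! h
  exact (sum_pos' (fun k _ => h k) ⟨j, mem_univ _, hj⟩).ne' hsum

theorem exists_sign_partition_of_card_image_le_two {ι : Type*} [Fintype ι] [DecidableEq ι]
    (v : ι → ℝ) (hsum : ∑ i, v i = 0) (hv : v ≠ 0) (hcard : #(univ.image v) ≤ 2) :
    ∃ c : ℝ, 0 < c ∧ ∃ Iminus Iplus : Finset ι,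
      Iminus.Nonempty ∧ Iplus.Nonempty ∧ Disjoint Iminus Iplus ∧
      Iminus ∪ Iplus = univ ∧
      (∀ i ∈ Iminus, v i = -c / (Iminus.card : ℝ)) ∧
      (∀ i ∈ Iplus, v i = c / (Iplus.card : ℝ)) := by
  obtain ⟨⟨i, hi⟩, j, hj⟩ := exists_neg_and_exists_pos_of_sum_eq_zero hsum hv
  have htwo := eq_or_eq_of_card_image_le_two hcard (hi.trans hj).ne
  set Iminus : Finset ι := {k | v k < 0}
  set Iplus : Finset ι := {k | ¬ v k < 0}
  have hminus : ∀ k ∈ Iminus, v k = v i := fun k hk =>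
    (htwo k).resolve_right fun h => by simp only [Iminus, mem_filter, h] at hk; linarith [hk.2]
  have hplus : ∀ k ∈ Iplus, v k = v j := fun k hk =>
    (htwo k).resolve_left fun h => by simp only [Iplus, mem_filter, h] at hk; exact hk.2 hi
  have hIminus : Iminus.Nonempty := ⟨i, by simpa [Iminus]⟩
  have hIplus : Iplus.Nonempty := ⟨j, by simpa [Iplus] using hj.le⟩
  have hcardMinus : 0 < (#Iminus : ℝ) := Nat.cast_pos.mpr hIminus.card_pos
  have hcardPlus : 0 < (#Iplus : ℝ) := Nat.cast_pos.mpr hIplus.card_pos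
  have hbalance : #Iminus * v i + #Iplus * v j = 0 := by
    rwa [← sum_filter_add_sum_filter_not univ (v · < 0), sum_congr rfl hminus,
      sum_congr rfl hplus, sum_const, sum_const, nsmul_eq_mul, nsmul_eq_mul] at hsum
  refine ⟨#Iplus * v j, mul_pos hcardPlus hj, Iminus, Iplus, hIminus, hIplus,
    disjoint_filter_filter_not _ _ _, filter_union_filter_not_eq _ _,
    fun k hk => ?_, fun k hk => ?_⟩
  · rw [hminus k hk, eq_div_iff hcardMinus.ne']
    linarith
  · rw [hplus k hk, eq_div_iff hcardPlus.ne']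
    ring

theorem dual_cone_generator_structure_general (ℓ : ℕ)
    (v : EuclideanSpace ℝ (Fin ℓ))
    (hsum : ∑ i, v i = 0) (hv0 : v ≠ 0)
    (𝒮 : Set (Fin ℓ × Fin ℓ))
    (horth : ∀ p ∈ 𝒮, ⟪rootVec ℓ p, v⟫ = 0)
    (hdim : Module.finrank ℝ (Submodule.span ℝ (rootVec ℓ '' 𝒮)) = ℓ - 2) :
    ∃ c : ℝ, 0 < c ∧ ∃ Iminus Iplus : Finset (Fin ℓ),
      Iminus.Nonempty ∧ Iplus.Nonempty ∧ Disjoint Iminus Iplus ∧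
      Iminus ∪ Iplus = Finset.univ ∧
      (∀ i ∈ Iminus, v i = -c / (Iminus.card : ℝ)) ∧
      (∀ i ∈ Iplus, v i = c / (Iplus.card : ℝ)) := by
  set W := Submodule.span ℝ (rootVec ℓ '' 𝒮)
  have hlevel : ∀ t, levelIndicator v.ofLp t ∈ Wᗮ := fun t =>
    mem_orthogonal_span_rootVec_iff.mpr fun p hp => by
      have := horth p hp
      rw [rootVec_inner, sub_eq_zero] at this
      simp [this]
  have hcard : #(univ.image v.ofLp) ≤ 2 := by
    have hW := W.finrank_add_finrank_orthogonal
    rw [finrank_euclideanSpace_fin, hdim] at hW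
    have := card_image_le_finrank_of_levelIndicator_mem v.ofLp Wᗮ hlevel
    omega
  exact exists_sign_partition_of_card_image_le_two v.ofLp hsum (by simpa using hv0) hcard

/-- A generator of an extreme ray of the dual cone `σ^∨`: if `v ∈ ℝ^ℓ` has
coordinates summing to zero, is nonzero, pairs nonnegatively with every
`m_{ij} = e_i - e_j`, `(i,j) ∈ S`, and is orthogonal to a subfamily
`𝒮 ⊆ S` spanning an `(ℓ-2)`-dimensional subspace (a facet of `σ`), then up to
a positive scaling, there is a partition `{1,…,ℓ} = I⁻ ⊔ I⁺` such that
`v i = -c/#I⁻` on `I⁻` and `v i = c/#I⁺` on `I⁺`. -/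
theorem dual_cone_generator_structure (ℓ : ℕ) (hℓ : 2 ≤ ℓ)
    (S : Set (Fin ℓ × Fin ℓ)) (hS : ∀ p ∈ S, p.1 < p.2)
    (v : EuclideanSpace ℝ (Fin ℓ))
    (hsum : ∑ i, v i = 0) (hv0 : v ≠ 0)
    (hnn : ∀ p ∈ S, 0 ≤ ⟪rootVec ℓ p, v⟫)
    (𝒮 : Set (Fin ℓ × Fin ℓ)) (h𝒮 : 𝒮 ⊆ S)
    (horth : ∀ p ∈ 𝒮, ⟪rootVec ℓ p, v⟫ = 0)
    (hdim : Module.finrank ℝ (Submodule.span ℝ (rootVec ℓ '' 𝒮)) = ℓ - 2) :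
    ∃ c : ℝ, 0 < c ∧ ∃ Iminus Iplus : Finset (Fin ℓ),
      Iminus.Nonempty ∧ Iplus.Nonempty ∧ Disjoint Iminus Iplus ∧
      Iminus ∪ Iplus = Finset.univ ∧
      (∀ i ∈ Iminus, v i = -c / (Iminus.card : ℝ)) ∧
      (∀ i ∈ Iplus, v i = c / (Iplus.card : ℝ)) :=
  dual_cone_generator_structure_general ℓ v hsum hv0 𝒮 horth hdim
end

section
/- Let C be a closed convex cone in a finite-dimensional real inner product space E whose linear span is all of E. Then a point x ∈ E lies in the topological interior of C if and only if ⟨x, v⟩ > 0 for every nonzero v in the dual cone C^∨. -/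
/-!
If `x` is interior to `C` and `v ≠ 0` lies in the dual cone, then `x - t • v ∈ C` for small
`t > 0`, whence `⟪x, v⟫ ≥ t ‖v‖² > 0`. Conversely, full span makes the interior of `C` nonempty,
so a point `x` outside it is separated from it by a functional `f`; since `C` is a cone, `f ≤ 0`
on `C` while `f x ≥ f 0 = 0`, and the Riesz representative of `-f` is a nonzero element of the
dual cone with `⟪x, v⟫ ≤ 0`.
-/

open scoped RealInnerProductSpace
open Filter Topology

theorem ConvexCone.map_nonpos_of_forall_map_le {E : Type*} [AddCommGroup E] [Module ℝ E]
    (C : ConvexCone ℝ E) (f : E →ₗ[ℝ] ℝ) {c : ℝ} (hc : ∀ a ∈ C, f a ≤ c) {a : E}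
    (ha : a ∈ C) : f a ≤ 0 := by
  by_contra! hfa
  have hscaled := hc _ (C.smul_mem (by positivity : 0 < (|c| + 1) / f a) ha)
  rw [map_smul, smul_eq_mul, div_mul_cancel₀ _ hfa.ne'] at hscaled
  linarith [le_abs_self c]

theorem ConvexCone.interior_nonempty_of_span_eq_top {E : Type*} [NormedAddCommGroup E]
    [NormedSpace ℝ E] [FiniteDimensional ℝ E] {C : ConvexCone ℝ E} (h0 : C.Pointed)
    (hspan : Submodule.span ℝ (C : Set E) = ⊤) : (interior (C : Set E)).Nonempty := by
  refine C.convex.interior_nonempty_iff_affineSpan_eq_top.2 ?_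
  rw [AffineSubspace.affineSpan_eq_top_iff_vectorSpan_eq_top_of_nonempty ℝ E E ⟨0, h0⟩,
    vectorSpan_eq_span_vsub_set_right ℝ h0]
  simpa using hspan

section InnerProductSpace

variable {E : Type*} [NormedAddCommGroup E] [InnerProductSpace ℝ E] [CompleteSpace E]

theorem inner_pos_of_mem_interior_of_mem_innerDual {s : Set E} {x v : E}
    (hx : x ∈ interior s) (hv : v ∈ ProperCone.innerDual s) (hv0 : v ≠ 0) : 0 < ⟪x, v⟫ := by
  have hnear : ∀ᶠ t : ℝ in 𝓝[>] 0, x - t • v ∈ s := by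
    have hlim : Tendsto (fun t : ℝ => x - t • v) (𝓝 0) (𝓝 x) := by
      simpa using (by fun_prop : Continuous fun t : ℝ => x - t • v).tendsto 0
    exact (hlim.mono_left nhdsWithin_le_nhds).eventually (mem_interior_iff_mem_nhds.1 hx)
  obtain ⟨t, hts, ht⟩ := (hnear.and self_mem_nhdsWithin).exists
  have hdual : 0 ≤ ⟪x - t • v, v⟫ := hv hts
  rw [inner_sub_left, real_inner_smul_left, real_inner_self_eq_norm_sq] at hdual
  have : 0 < t * ‖v‖ ^ 2 := mul_pos ht (by positivity)
  linarith

theorem ConvexCone.exists_mem_innerDual_inner_nonpos_of_notMem_interior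
    {C : ConvexCone ℝ E} (h0 : C.Pointed) (hint : (interior (C : Set E)).Nonempty) {x : E}
    (hx : x ∉ interior (C : Set E)) :
    ∃ v ∈ ProperCone.innerDual (C : Set E), v ≠ 0 ∧ ⟪x, v⟫ ≤ 0 := by
  obtain ⟨f, hf⟩ := geometric_hahn_banach_open_point C.convex.interior isOpen_interior hx
  have hle : ∀ a ∈ C, f a ≤ f x := by
    have hcl : closure (interior (C : Set E)) ⊆ {a | f a ≤ f x} :=
      closure_minimal (fun a ha => (hf a ha).le) (isClosed_le f.continuous continuous_const)
    rw [C.convex.closure_interior_eq_closure_of_nonempty_interior hint] at hcl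
    exact fun a ha => hcl (subset_closure ha)
  have hf0 : f ≠ 0 := by
    obtain ⟨a₀, ha₀⟩ := hint
    rintro rfl
    exact (hf a₀ ha₀).false
  have hinner (z : E) : ⟪z, (InnerProductSpace.toDual ℝ E).symm (-f)⟫ = -f z := by
    rw [real_inner_comm, InnerProductSpace.toDual_symm_apply, neg_apply]
  refine ⟨(InnerProductSpace.toDual ℝ E).symm (-f), ProperCone.mem_innerDual.2 fun a ha => ?_,
    by simpa using hf0, ?_⟩
  · rw [hinner, neg_nonneg]
    exact C.map_nonpos_of_forall_map_le f.toLinearMap hle ha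
  · rw [hinner, neg_nonpos]
    simpa using hle 0 h0

end InnerProductSpace

/-- For a nonempty closed convex cone `C` with full linear span in a
finite-dimensional real inner product space, a point `x` lies in the interior
of `C` iff `⟪x, v⟫ > 0` for every nonzero `v` in the dual cone `C^∨`. -/
theorem mem_interior_iff_inner_pos_on_dualCone (E : Type*) [NormedAddCommGroup E]
    [InnerProductSpace ℝ E] [FiniteDimensional ℝ E]
    (C : ConvexCone ℝ E) (hne : (C : Set E).Nonempty) (hcl : IsClosed (C : Set E))
    (hspan : Submodule.span ℝ (C : Set E) = ⊤) (x : E) :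
    x ∈ interior (C : Set E) ↔
      ∀ v ∈ ProperCone.innerDual (C : Set E), v ≠ 0 → 0 < ⟪x, v⟫ := by
  have h0 : C.Pointed := .of_nonempty_of_isClosed hne hcl
  refine ⟨fun hx v hv hv0 => inner_pos_of_mem_interior_of_mem_innerDual hx hv hv0, fun h => ?_⟩
  by_contra hx
  obtain ⟨v, hv, hv0, hxv⟩ := C.exists_mem_innerDual_inner_nonpos_of_notMem_interior h0
    (C.interior_nonempty_of_span_eq_top h0 hspan) hx
  exact (h v hv hv0).not_ge hxv
end

section
/- Let m_1, …, m_N be vectors in ℝ^n and let σ = {Σ_{i=1}^N t_i m_i : t_i ≥ 0 for all i} be the convex cone they generate. Then there exists a constant C > 0 such that every x ∈ σ can be written as x = Σ_{i=1}^N t_i m_i with 0 ≤ t_i ≤ C·‖x‖ for every i, where ‖·‖ is the Euclidean norm. -/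
/-!
Conic Carathéodory: if the vectors `m i` with `t i ≠ 0` are linearly dependent, moving `t` along a
relation `∑ c i • m i = 0` until a first coordinate hits zero keeps `t ≥ 0` and the sum, and
shrinks the support; so every point of the cone is a nonnegative combination with linearly
independent support. On a linearly independent family, `s ↦ ∑ s i • m i` is injective on a
finite-dimensional space, hence antilipschitz, which bounds each `|s i|` by a multiple of the
norm of the sum. There are finitely many supports, so one constant serves them all.
-/

open Function

theorem exists_sum_smul_eq_zero_of_not_linearIndepOn {ι R M : Type*} [Fintype ι] [Ring R]
    [AddCommGroup M] [Module R M] {v : ι → M} {S : Set ι} (h : ¬LinearIndepOn R v S) :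
    ∃ c : ι → R, c ≠ 0 ∧ support c ⊆ S ∧ ∑ i, c i • v i = 0 := by
  rw [linearIndepOn_iff] at h
  push Not at h
  obtain ⟨l, hlS, hl0, hl⟩ := h
  refine ⟨l, Finsupp.coe_eq_zero.not.mpr hl, by simpa [Finsupp.mem_supported] using hlS, ?_⟩
  simpa [Finsupp.linearCombination_apply, Finsupp.sum_fintype] using hl0

section Caratheodory

variable {ι 𝕜 E : Type*} [Fintype ι] [Field 𝕜] [LinearOrder 𝕜] [IsStrictOrderedRing 𝕜]
  [AddCommGroup E] [Module 𝕜 E]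

theorem exists_nonneg_sub_smul_support_ssubset {s c : ι → 𝕜} (hs : 0 ≤ s)
    (hc : ∃ i, 0 < c i) (hcs : support c ⊆ support s) :
    ∃ a : 𝕜, 0 ≤ s - a • c ∧ support (s - a • c) ⊂ support s := by
  classical
  -- the step is the least ratio `s i / c i` over `c i > 0`, attained at `i₀`
  obtain ⟨i₀, hi₀, hmin⟩ := (Finset.univ.filter (0 < c ·)).exists_min_image
    (fun i => s i / c i) (let ⟨i, hi⟩ := hc; ⟨i, by simpa using hi⟩)
  replace hi₀ : 0 < c i₀ := by simpa using hi₀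
  have hle : ∀ i, 0 < c i → s i₀ / c i₀ * c i ≤ s i := fun i hi =>
    (le_div_iff₀ hi).mp (hmin i (by simpa using hi))
  refine ⟨s i₀ / c i₀, fun i => ?_, (Set.ssubset_iff_of_subset fun i hi => ?_).mpr
    ⟨i₀, hcs hi₀.ne', by simp [hi₀.ne']⟩⟩
  · rcases lt_or_ge 0 (c i) with hci | hci
    · simpa using hle i hci
    · have : s i₀ / c i₀ * c i ≤ 0 :=
        mul_nonpos_of_nonneg_of_nonpos (div_nonneg (hs i₀) hi₀.le) hci
      simp only [Pi.zero_apply, Pi.sub_apply, Pi.smul_apply, smul_eq_mul]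
      linarith [show 0 ≤ s i from hs i]
  · by_contra hsi
    have hci : c i = 0 := notMem_support.mp fun h => hsi (hcs h)
    exact hi (by simp [notMem_support.mp hsi, hci])

theorem exists_nonneg_sum_smul_eq_support_ssubset {v : ι → E} {s : ι → 𝕜}
    (hs : 0 ≤ s) (h : ¬LinearIndepOn 𝕜 v (support s)) :
    ∃ s' : ι → 𝕜, 0 ≤ s' ∧ ∑ i, s' i • v i = ∑ i, s i • v i ∧ support s' ⊂ support s := by
  obtain ⟨c, hc0, hcs, hcv⟩ := exists_sum_smul_eq_zero_of_not_linearIndepOn h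
  obtain ⟨c, hcpos, hcs, hcv⟩ : ∃ c : ι → 𝕜, (∃ i, 0 < c i) ∧ support c ⊆ support s ∧
      ∑ i, c i • v i = 0 := by
    obtain ⟨i, hi⟩ := Function.ne_iff.mp hc0
    rcases hi.lt_or_gt with hneg | hpos
    · exact ⟨-c, ⟨i, by simpa using hneg⟩, by rwa [support_neg], by simp [hcv]⟩
    · exact ⟨c, ⟨i, hpos⟩, hcs, hcv⟩
  obtain ⟨a, ha, hsupp⟩ := exists_nonneg_sub_smul_support_ssubset hs hcpos hcs
  refine ⟨s - a • c, ha, ?_, hsupp⟩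
  simp [sub_smul, Finset.sum_sub_distrib, mul_smul, ← Finset.smul_sum, hcv]

theorem exists_nonneg_sum_smul_eq_linearIndepOn_support (v : ι → E) {t : ι → 𝕜} (ht : 0 ≤ t) :
    ∃ s : ι → 𝕜, 0 ≤ s ∧ ∑ i, s i • v i = ∑ i, t i • v i ∧
      LinearIndepOn 𝕜 v (support s) := by
  induction hk : (support t).ncard using Nat.strong_induction_on generalizing t with
  | _ k ih =>
  by_cases hli : LinearIndepOn 𝕜 v (support t)
  · exact ⟨t, ht, rfl, hli⟩
  obtain ⟨t', ht', hsum, hsupp⟩ := exists_nonneg_sum_smul_eq_support_ssubset ht hli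
  obtain ⟨s, hs, hsum', hs_li⟩ := ih _ (hk ▸ Set.ncard_lt_ncard hsupp) ht' rfl
  exact ⟨s, hs, hsum'.trans hsum, hs_li⟩

end Caratheodory

section CoefficientBound

variable {ι 𝕜 E : Type*} [Fintype ι] [NontriviallyNormedField 𝕜] [CompleteSpace 𝕜]
  [NormedAddCommGroup E] [NormedSpace 𝕜 E] {v : ι → E}

theorem LinearIndependent.exists_norm_le_mul_norm_sum_smul (hv : LinearIndependent 𝕜 v) :
    ∃ C > 0, ∀ (s : ι → 𝕜) (i : ι), ‖s i‖ ≤ C * ‖∑ j, s j • v j‖ := by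
  obtain ⟨K, hK, hanti⟩ := (Fintype.linearCombination 𝕜 v).exists_antilipschitzWith
    (LinearMap.ker_eq_bot.mpr (linearIndependent_iff_injective_fintypeLinearCombination.mp hv))
  refine ⟨K, hK, fun s i => (norm_le_pi_norm s i).trans ?_⟩
  simpa [Fintype.linearCombination_apply] using
    ZeroHomClass.bound_of_antilipschitz (Fintype.linearCombination 𝕜 v) hanti s

theorem LinearIndepOn.exists_norm_le_mul_norm_sum_smul {S : Set ι}
    (hv : LinearIndepOn 𝕜 v S) :
    ∃ C > 0, ∀ s : ι → 𝕜, support s ⊆ S → ∀ i, ‖s i‖ ≤ C * ‖∑ j, s j • v j‖ := by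
  classical
  obtain ⟨C, hC, hbound⟩ := LinearIndependent.exists_norm_le_mul_norm_sum_smul hv
  refine ⟨C, hC, fun s hs i => ?_⟩
  by_cases hi : i ∈ S
  · have hsum : ∑ j, s j • v j = ∑ j : S, s j • v j := by
      rw [← Fintype.sum_subtype_add_sum_subtype (· ∈ S), add_eq_left]
      exact Finset.sum_eq_zero fun j _ => by
        rw [notMem_support.mp fun h => j.2 (hs h), zero_smul]
    simpa [hsum] using hbound (fun j => s j) ⟨i, hi⟩
  · rw [notMem_support.mp fun h => hi (hs h), norm_zero]
    positivity

theorem exists_norm_le_mul_norm_sum_smul_of_linearIndepOn_support (v : ι → E) :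
    ∃ C > 0, ∀ s : ι → 𝕜, LinearIndepOn 𝕜 v (support s) →
      ∀ i, ‖s i‖ ≤ C * ‖∑ j, s j • v j‖ := by
  have key (S : Set ι) : ∃ C > 0, LinearIndepOn 𝕜 v S →
      ∀ s : ι → 𝕜, support s ⊆ S → ∀ i, ‖s i‖ ≤ C * ‖∑ j, s j • v j‖ := by
    by_cases hS : LinearIndepOn 𝕜 v S
    · obtain ⟨C, hC, h⟩ := hS.exists_norm_le_mul_norm_sum_smul
      exact ⟨C, hC, fun _ => h⟩
    · exact ⟨1, one_pos, fun h => absurd h hS⟩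
  choose C hC hbound using key
  obtain ⟨B, hB⟩ := Finite.bddAbove_range C
  refine ⟨max B 1, by positivity, fun s hs i => (hbound _ hs s subset_rfl i).trans ?_⟩
  gcongr
  exact (hB ⟨_, rfl⟩).trans (le_max_left _ _)

end CoefficientBound

/-- For vectors `m 1, …, m N` in `ℝ^n`, there is a constant `C > 0` such that
every element `x` of the convex cone they generate can be written as a
nonnegative combination `x = ∑ i, t i • m i` with `t i ≤ C * ‖x‖` for all `i`. -/
theorem bounded_coefficients_in_cone (n N : ℕ) (m : Fin N → EuclideanSpace ℝ (Fin n)) :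
    ∃ C : ℝ, 0 < C ∧
      ∀ x ∈ {y : EuclideanSpace ℝ (Fin n) |
          ∃ t : Fin N → ℝ, (∀ i, 0 ≤ t i) ∧ y = ∑ i, t i • m i},
        ∃ t : Fin N → ℝ, (∀ i, 0 ≤ t i ∧ t i ≤ C * ‖x‖) ∧ x = ∑ i, t i • m i := by
  obtain ⟨C, hC, hbound⟩ :=
    exists_norm_le_mul_norm_sum_smul_of_linearIndepOn_support (𝕜 := ℝ) m
  refine ⟨C, hC, ?_⟩
  rintro _ ⟨t, ht, rfl⟩
  obtain ⟨s, hs, hsum, hli⟩ := exists_nonneg_sum_smul_eq_linearIndepOn_support m (t := t) ht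
  refine ⟨s, fun i => ⟨hs i, ?_⟩, hsum.symm⟩
  calc s i ≤ ‖s i‖ := Real.le_norm_self _
    _ ≤ C * ‖∑ j, s j • m j‖ := hbound s hli i
    _ = C * ‖∑ j, t j • m j‖ := by rw [hsum]
end

section
/- Let m_1, …, m_N be vectors in ℝ^n, let σ be the convex cone they generate, and for η > 0 let σ_η := {Σ_{i=1}^N t_i m_i : 0 ≤ t_i < η for all i}. Then for every η > 0 there exists r > 0 such that every x ∈ σ with ‖x‖ < r belongs to σ_η. -/
open Finset Filter Topology

private lemma cone_sum_continuous {n N : ℕ} (m : Fin N → EuclideanSpace ℝ (Fin n)) :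
    Continuous (fun t : Fin N → ℝ => ∑ i, t i • m i) :=
  continuous_finset_sum _ fun i _ => (continuous_apply i).smul continuous_const

/-- Any element of the cone has a representation minimizing the sum of coefficients. -/
private lemma exists_min_rep {n N : ℕ} (m : Fin N → EuclideanSpace ℝ (Fin n))
    (x : EuclideanSpace ℝ (Fin n)) (t0 : Fin N → ℝ) (ht0 : ∀ i, 0 ≤ t0 i)
    (hx : x = ∑ i, t0 i • m i) :
    ∃ t : Fin N → ℝ, (∀ i, 0 ≤ t i) ∧ x = ∑ i, t i • m i ∧
      ∀ s : Fin N → ℝ, (∀ i, 0 ≤ s i) → x = ∑ i, s i • m i →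
        ∑ i, t i ≤ ∑ i, s i := by
  set M := ∑ i, t0 i with hM
  have hM0 : ∀ i, t0 i ≤ M :=
    fun i => Finset.single_le_sum (fun j _ => ht0 j) (Finset.mem_univ i)
  set A : Set (Fin N → ℝ) :=
    Set.Icc (0 : Fin N → ℝ) (fun _ => M) ∩ {t | (∑ i, t i • m i) = x} with hA
  have hA_ne : A.Nonempty := ⟨t0, ⟨fun i => ht0 i, fun i => hM0 i⟩, hx.symm⟩
  have hA_cpt : IsCompact A :=
    isCompact_Icc.inter_right ((isClosed_singleton.preimage (cone_sum_continuous m)))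
  have hcsum : Continuous (fun t : Fin N → ℝ => ∑ i, t i) :=
    continuous_finset_sum _ fun i _ => continuous_apply i
  obtain ⟨t, htA, hmin⟩ := hA_cpt.exists_isMinOn hA_ne hcsum.continuousOn
  obtain ⟨⟨ht0', htM⟩, htx⟩ := htA
  refine ⟨t, fun i => ht0' i, htx.symm, ?_⟩
  intro s hs hxs
  by_contra hlt
  push_neg at hlt
  have htle : ∑ i, t i ≤ M := hmin ⟨⟨fun i => ht0 i, fun i => hM0 i⟩, hx.symm⟩
  have hsM : ∀ i, s i ≤ M := fun i =>
    le_trans (le_trans (Finset.single_le_sum (fun j _ => hs j) (Finset.mem_univ i))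
      hlt.le) htle
  exact absurd (hmin (⟨⟨fun i => hs i, fun i => hsM i⟩, hxs.symm⟩ : s ∈ A))
    (not_le.mpr hlt)

/-- For vectors `m 1, …, m N` in `ℝ^n` generating a convex cone `σ`, and any
`η > 0`, there is `r > 0` such that every `x ∈ σ` with `‖x‖ < r` is a
nonnegative combination of the `m i` with all coefficients in `[0, η)`. -/
theorem small_cone_elements_have_small_coefficients (n N : ℕ)
    (m : Fin N → EuclideanSpace ℝ (Fin n)) (η : ℝ) (hη : 0 < η) :
    ∃ r : ℝ, 0 < r ∧
      ∀ x ∈ {y : EuclideanSpace ℝ (Fin n) |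
          ∃ t : Fin N → ℝ, (∀ i, 0 ≤ t i) ∧ y = ∑ i, t i • m i},
        ‖x‖ < r →
          ∃ t : Fin N → ℝ, (∀ i, 0 ≤ t i ∧ t i < η) ∧ x = ∑ i, t i • m i := by
  have key : ∃ C : ℝ, 0 < C ∧ ∀ (x : EuclideanSpace ℝ (Fin n)) (t : Fin N → ℝ),
      (∀ i, 0 ≤ t i) → x = ∑ i, t i • m i →
      (∀ s : Fin N → ℝ, (∀ i, 0 ≤ s i) → x = ∑ i, s i • m i →
        ∑ i, t i ≤ ∑ i, s i) →
      ∑ i, t i ≤ C * ‖x‖ := by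
    by_contra hcon
    push_neg at hcon
    have H : ∀ k : ℕ, ∃ (x : EuclideanSpace ℝ (Fin n)) (t : Fin N → ℝ),
        (∀ i, 0 ≤ t i) ∧ x = ∑ i, t i • m i ∧
        (∀ s : Fin N → ℝ, (∀ i, 0 ≤ s i) → x = ∑ i, s i • m i →
          ∑ i, t i ≤ ∑ i, s i) ∧
        ((k : ℝ) + 1) * ‖x‖ < ∑ i, t i := by
      intro k
      obtain ⟨x, t, h1, h2, h3, h4⟩ := hcon ((k : ℝ) + 1) (by positivity)
      exact ⟨x, t, h1, h2, h3, h4⟩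
    choose x t ht hx hmin hbig using H
    set s : ℕ → ℝ := fun k => ∑ i, t k i with hs
    have hsk : ∀ k, 0 < s k := fun k =>
      lt_of_le_of_lt (by positivity) (hbig k)
    set u : ℕ → Fin N → ℝ := fun k i => t k i / s k with hu
    have hu0 : ∀ k i, 0 ≤ u k i := fun k i => div_nonneg (ht k i) (hsk k).le
    have hu1 : ∀ k i, u k i ≤ 1 := fun k i =>
      div_le_one_of_le₀ (Finset.single_le_sum (fun j _ => ht k j)
        (Finset.mem_univ i)) (hsk k).le
    have husum : ∀ k, ∑ i, u k i = 1 := by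
      intro k
      simp only [hu, ← Finset.sum_div]
      exact div_self (hsk k).ne'
    set y : ℕ → EuclideanSpace ℝ (Fin n) := fun k => (s k)⁻¹ • x k with hy
    have hyk : ∀ k, y k = ∑ i, u k i • m i := by
      intro k
      simp only [hy, hx k, Finset.smul_sum, smul_smul, hu, div_eq_inv_mul]
    have hynorm : ∀ k, ‖y k‖ ≤ 1 / ((k : ℝ) + 1) := by
      intro k
      have h1 : ‖y k‖ = ‖x k‖ / s k := by
        simp [hy, norm_smul, abs_of_pos (hsk k), div_eq_inv_mul]
      rw [h1, div_le_div_iff₀ (hsk k) (by positivity)]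
      have := hbig k
      nlinarith [norm_nonneg (x k)]
    have humin : ∀ k (v : Fin N → ℝ), (∀ i, 0 ≤ v i) → y k = ∑ i, v i • m i →
        (1 : ℝ) ≤ ∑ i, v i := by
      intro k v hv hyv
      have hxk : x k = ∑ i, (s k * v i) • m i := by
        have : x k = s k • y k := by
          simp [hy, smul_smul, mul_inv_cancel₀ (hsk k).ne']
        rw [this, hyv, Finset.smul_sum]
        simp [smul_smul]
      have h2 := hmin k (fun i => s k * v i) (fun i => mul_nonneg (hsk k).le (hv i)) hxk
      have h3 : s k ≤ s k * ∑ i, v i := by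
        rw [Finset.mul_sum]; exact h2
      nlinarith [hsk k]
    -- compactness: extract convergent subsequence of u in Icc 0 1
    have huIcc : ∀ k, u k ∈ Set.Icc (0 : Fin N → ℝ) 1 :=
      fun k => ⟨fun i => hu0 k i, fun i => hu1 k i⟩
    obtain ⟨w, hwIcc, φ, hφ, hconv⟩ :=
      (isCompact_Icc (a := (0 : Fin N → ℝ)) (b := 1)).tendsto_subseq huIcc
    -- sum of w is 1
    have hcsum : Continuous (fun v : Fin N → ℝ => ∑ i, v i) :=
      continuous_finset_sum _ fun i _ => continuous_apply i
    have hwsum : ∑ i, w i = 1 := by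
      have h1 : Tendsto (fun k => ∑ i, u (φ k) i) atTop (𝓝 (∑ i, w i)) :=
        (hcsum.tendsto w).comp hconv
      have h2 : Tendsto (fun k => ∑ i, u (φ k) i) atTop (𝓝 1) := by
        simpa [husum] using tendsto_const_nhds (x := (1:ℝ)) (f := atTop (α := ℕ))
      exact tendsto_nhds_unique h1 h2
    -- f(w) = 0
    have hfw : ∑ i, w i • m i = 0 := by
      have h1 : Tendsto (fun k => ∑ i, u (φ k) i • m i) atTop
          (𝓝 (∑ i, w i • m i)) := ((cone_sum_continuous m).tendsto w).comp hconv
      have h2 : Tendsto (fun k => y (φ k)) atTop (𝓝 0) := by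
        rw [tendsto_zero_iff_norm_tendsto_zero]
        apply squeeze_zero (fun k => norm_nonneg _) (fun k => ?_)
          tendsto_one_div_add_atTop_nhds_zero_nat
        calc ‖y (φ k)‖ ≤ 1 / ((φ k : ℝ) + 1) := hynorm (φ k)
          _ ≤ 1 / ((k : ℝ) + 1) := by
              have hk : (k : ℝ) ≤ (φ k : ℝ) := Nat.cast_le.mpr hφ.le_apply
              apply div_le_div_of_nonneg_left one_pos.le (by positivity)
              linarith
      have h2' : Tendsto (fun k => ∑ i, u (φ k) i • m i) atTop (𝓝 0) := by
        simpa [← hyk] using h2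
      exact tendsto_nhds_unique h1 h2'
    -- positive coordinates of w
    set P : Finset (Fin N) := Finset.univ.filter (fun i => 0 < w i) with hP
    have hPne : P.Nonempty := by
      by_contra hPe
      rw [Finset.not_nonempty_iff_eq_empty] at hPe
      have : ∀ i, w i = 0 := by
        intro i
        have h1 : ¬ 0 < w i := by
          intro h
          have : i ∈ P := by simp [hP, h]
          simp [hPe] at this
        have h2 : 0 ≤ w i := hwIcc.1 i
        linarith [lt_or_eq_of_le h2]
      simp [this] at hwsum
    set ε : ℝ := (P.inf' hPne w) / 2 with hε
    have hεpos : 0 < ε := by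
      have : 0 < P.inf' hPne w := by
        rw [Finset.lt_inf'_iff]
        intro i hi
        exact (Finset.mem_filter.mp hi).2
      positivity
    have hεle : ∀ i, 0 < w i → ε ≤ w i / 2 := by
      intro i hi
      have : P.inf' hPne w ≤ w i :=
        Finset.inf'_le w (by simp [hP, hi])
      rw [hε]; linarith
    -- get a large k with dist (u (φ k)) w < ε
    have hev : ∀ᶠ k in atTop, dist (u (φ k)) w < ε :=
      (Metric.tendsto_nhds.mp hconv) ε hεpos
    obtain ⟨k, hk⟩ := hev.exists
    set v : Fin N → ℝ := fun i => u (φ k) i - w i / 2 with hv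
    have hv0 : ∀ i, 0 ≤ v i := by
      intro i
      rcases lt_or_eq_of_le (hwIcc.1 i) with hwi | hwi
      · have hd : dist (u (φ k) i) (w i) < ε :=
          lt_of_le_of_lt (dist_le_pi_dist (u (φ k)) w i) hk
        rw [Real.dist_eq, abs_lt] at hd
        have := hεle i hwi
        simp only [hv]
        linarith [hd.1]
      · simp [hv, ← hwi, hu0 (φ k) i]
    have hvrep : y (φ k) = ∑ i, v i • m i := by
      simp only [hv, sub_smul, Finset.sum_sub_distrib]
      have h1 : ∑ i, (w i / 2) • m i = 0 := by
        have : ∑ i, (w i / 2) • m i = (2:ℝ)⁻¹ • ∑ i, w i • m i := by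
          rw [Finset.smul_sum]
          congr 1; ext i
          rw [smul_smul, div_eq_inv_mul]
        rw [this, hfw, smul_zero]
      rw [h1, sub_zero, ← hyk]
    have hvsum : ∑ i, v i = 1/2 := by
      simp only [hv, Finset.sum_sub_distrib, husum, ← Finset.sum_div, hwsum]
      norm_num
    have := humin (φ k) v hv0 hvrep
    rw [hvsum] at this
    linarith
  obtain ⟨C, hC, hkey⟩ := key
  refine ⟨η / C, div_pos hη hC, ?_⟩
  rintro x ⟨t0, ht0, hx⟩ hxr
  obtain ⟨t, ht, hxt, hmin⟩ := exists_min_rep m x t0 ht0 hx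
  refine ⟨t, fun i => ⟨ht i, ?_⟩, hxt⟩
  calc t i ≤ ∑ j, t j :=
        Finset.single_le_sum (fun j _ => ht j) (Finset.mem_univ i)
    _ ≤ C * ‖x‖ := hkey x t ht hxt hmin
    _ < C * (η / C) := by exact mul_lt_mul_of_pos_left hxr hC
    _ = η := by field_simp
end

section
/- Let m_1, …, m_N be nonzero vectors in ℝ^n whose generated convex cone σ is salient, i.e. σ ∩ (−σ) = {0}. If (t^{(k)})_{k∈ℕ} is a sequence of vectors in ℝ^N with all coordinates nonnegative such that Σ_{i=1}^N t_i^{(k)} m_i → 0 in ℝ^n as k → ∞, then t^{(k)} → 0 in ℝ^N, i.e. t_i^{(k)} → 0 for every i. -/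
/-!
If `∑ uᵢ mᵢ = 0` with `u ≥ 0`, then each `uⱼ mⱼ` lies in `σ ∩ -σ = {0}`, since `-(uⱼ mⱼ)` is the sum
of the other terms; so `u = 0` when all `mᵢ ≠ 0`. Hence `‖∑ uᵢ mᵢ‖` is positive on the compact
standard simplex, thus bounded below there by some `c > 0`, and by homogeneity
`c ∑ uᵢ ≤ ‖∑ uᵢ mᵢ‖` for all `u ≥ 0`. This squeezes the coefficients `t⁽ᵏ⁾ᵢ` to `0`.
-/

open Filter Topology

section Cone

variable (𝕜 : Type*) {E ι : Type*} [Fintype ι]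

section Semiring

variable [Semiring 𝕜] [PartialOrder 𝕜] [AddCommMonoid E] [Module 𝕜 E]

def nonnegSpan (m : ι → E) : Set E :=
  {y | ∃ t : ι → 𝕜, (∀ i, 0 ≤ t i) ∧ y = ∑ i, t i • m i}

variable {𝕜}

theorem smul_mem_nonnegSpan [DecidableEq ι] (m : ι → E) {a : 𝕜} (ha : 0 ≤ a) (j : ι) :
    a • m j ∈ nonnegSpan 𝕜 m := by
  refine ⟨Pi.single j a, fun i => ?_, by simp [Pi.single_apply, ite_smul]⟩
  rcases eq_or_ne i j with rfl | h <;> simp [*]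

end Semiring

variable {𝕜} [Ring 𝕜] [PartialOrder 𝕜] [AddCommGroup E] [Module 𝕜 E]

theorem smul_eq_zero_of_sum_smul_eq_zero_of_salient {m : ι → E}
    (hsal : nonnegSpan 𝕜 m ∩ -nonnegSpan 𝕜 m = {0}) {u : ι → 𝕜} (hu : ∀ i, 0 ≤ u i)
    (hsum : ∑ i, u i • m i = 0) (j : ι) : u j • m j = 0 := by
  classical
  have hrest : -(u j • m j) ∈ nonnegSpan 𝕜 m := by
    refine ⟨u - Pi.single j (u j), fun i => ?_, ?_⟩
    · rcases eq_or_ne i j with rfl | h <;> simp [*]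
    · simp [sub_smul, Finset.sum_sub_distrib, hsum, Pi.single_apply, ite_smul]
  have : u j • m j ∈ nonnegSpan 𝕜 m ∩ -nonnegSpan 𝕜 m :=
    ⟨smul_mem_nonnegSpan m (hu j) j, Set.mem_neg.2 hrest⟩
  simpa [hsal] using this

theorem eq_zero_of_sum_smul_eq_zero_of_salient [NoZeroSMulDivisors 𝕜 E] {m : ι → E}
    (hm : ∀ i, m i ≠ 0) (hsal : nonnegSpan 𝕜 m ∩ -nonnegSpan 𝕜 m = {0}) {u : ι → 𝕜}
    (hu : ∀ i, 0 ≤ u i) (hsum : ∑ i, u i • m i = 0) (j : ι) : u j = 0 :=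
  (NoZeroSMulDivisors.eq_zero_or_eq_zero_of_smul_eq_zero
    (smul_eq_zero_of_sum_smul_eq_zero_of_salient hsal hu hsum j)).resolve_right (hm j)

end Cone

section Bound

variable {E ι : Type*} [NormedAddCommGroup E] [NormedSpace ℝ E] [Fintype ι]

theorem exists_pos_mul_sum_le_norm_sum_smul {m : ι → E}
    (hinj : ∀ u : ι → ℝ, (∀ i, 0 ≤ u i) → ∑ i, u i • m i = 0 → u = 0) :
    ∃ c > 0, ∀ u : ι → ℝ, (∀ i, 0 ≤ u i) → c * ∑ i, u i ≤ ‖∑ i, u i • m i‖ := by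
  have hpos : ∀ u ∈ stdSimplex ℝ ι, 0 < ‖∑ i, u i • m i‖ := by
    rintro u ⟨hu, hsum⟩
    refine norm_pos_iff.2 fun h => ?_
    simp [hinj u hu h] at hsum
  obtain ⟨c, hc, hle⟩ := (isCompact_stdSimplex ℝ ι).exists_forall_le' (by fun_prop) hpos
  refine ⟨c, hc, fun u hu => ?_⟩
  obtain hs | hs := (Finset.sum_nonneg fun i _ => hu i : (0 : ℝ) ≤ ∑ i, u i).eq_or_lt
  · simp [← hs]
  set s := ∑ i, u i
  have hmem : s⁻¹ • u ∈ stdSimplex ℝ ι :=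
    ⟨fun i => smul_nonneg (inv_nonneg.2 hs.le) (hu i), by
      simpa [← Finset.mul_sum] using inv_mul_cancel₀ hs.ne'⟩
  have := hle _ hmem
  simp only [Pi.smul_apply, smul_eq_mul, mul_smul, ← Finset.smul_sum, norm_smul,
    norm_inv, Real.norm_of_nonneg hs.le] at this
  rwa [le_inv_mul_iff₀ hs, mul_comm] at this

theorem tendsto_coeff_zero_of_tendsto_sum_smul {m : ι → E} {c : ℝ} (hc : 0 < c)
    (hbound : ∀ u : ι → ℝ, (∀ i, 0 ≤ u i) → c * ∑ i, u i ≤ ‖∑ i, u i • m i‖)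
    {α : Type*} {l : Filter α} {t : α → ι → ℝ} (ht : ∀ k i, 0 ≤ t k i)
    (hconv : Tendsto (fun k => ∑ i, t k i • m i) l (𝓝 0)) (j : ι) :
    Tendsto (fun k => t k j) l (𝓝 0) := by
  have hnorm : Tendsto (fun k => c⁻¹ * ‖∑ i, t k i • m i‖) l (𝓝 0) := by
    simpa using (tendsto_zero_iff_norm_tendsto_zero.1 hconv).const_mul c⁻¹
  refine squeeze_zero (fun k => ht k j) (fun k => ?_) hnorm
  calc t k j ≤ ∑ i, t k i := Finset.single_le_sum (fun i _ => ht k i) (Finset.mem_univ j)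
    _ ≤ c⁻¹ * ‖∑ i, t k i • m i‖ := by rw [le_inv_mul_iff₀ hc]; exact hbound _ (ht k)

end Bound

/-- If `m 1, …, m N` are nonzero vectors in `ℝ^n` generating a salient convex
cone, and `t⁽ᵏ⁾` are nonnegative coefficient vectors with
`∑ i, t⁽ᵏ⁾ i • m i → 0`, then every coordinate `t⁽ᵏ⁾ i → 0`. -/
theorem coefficients_tendsto_zero_of_salient (n N : ℕ)
    (m : Fin N → EuclideanSpace ℝ (Fin n)) (hm : ∀ i, m i ≠ 0)
    (hsal : {y : EuclideanSpace ℝ (Fin n) |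
        ∃ t : Fin N → ℝ, (∀ i, 0 ≤ t i) ∧ y = ∑ i, t i • m i} ∩
      (-{y : EuclideanSpace ℝ (Fin n) |
        ∃ t : Fin N → ℝ, (∀ i, 0 ≤ t i) ∧ y = ∑ i, t i • m i}) = {0})
    (t : ℕ → Fin N → ℝ) (ht : ∀ k i, 0 ≤ t k i)
    (hconv : Filter.Tendsto (fun k => ∑ i, t k i • m i) Filter.atTop (nhds 0)) :
    ∀ i, Filter.Tendsto (fun k => t k i) Filter.atTop (nhds 0) := by
  obtain ⟨c, hc, hbound⟩ := exists_pos_mul_sum_le_norm_sum_smul fun u hu hsum =>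
    funext (eq_zero_of_sum_smul_eq_zero_of_salient (𝕜 := ℝ) hm hsal hu hsum)
  exact tendsto_coeff_zero_of_tendsto_sum_smul hc hbound ht hconv
end
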